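/- Consider the symmetrizable hyperbolic system d_t v + (v . grad) v + 2 a grad a = 0, d_t a + (v . grad) a + (1/2) a div v = 0 on R^d, obtained from the compressible Euler system with f(rho) = rho by the change of unknown a = sqrt(rho). If the initial data (v_0, a_0) are smooth and compactly supported, then the smooth solution (v, a) remains, for each time 0 <= t < T_max before blow-up, supported in the same compact set as the initial data (zero speed of propagation of the support). -/

import Mathlib

open MeasureTheory Real Filter Topology
open scoped ENNReal
noncomputable section

abbrev Rd (d : ℕ) := EuclideanSpace ℝ (Fin d)

/-- unit coordinate vector -/
def udir (d : ℕ) (i : Fin d) : Rd d := EuclideanSpace.single i 1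

/-- partial derivative of a real-valued function -/
def pd {d : ℕ} (i : Fin d) (f : Rd d → ℝ) (x : Rd d) : ℝ := fderiv ℝ f x (udir d i)

/-- divergence of a vector field -/
def divV {d : ℕ} (v : Rd d → Rd d) (x : Rd d) : ℝ := ∑ i, pd i (fun y => v y i) x

lemma euclid_abs_le_norm {d : ℕ} (x : Rd d) (i : Fin d) : |x i| ≤ ‖x‖ := by
  rw [EuclideanSpace.norm_eq,
    Real.le_sqrt (abs_nonneg _) (Finset.sum_nonneg fun _ _ => sq_nonneg _)]
  calc |x i| ^ 2 = ‖x i‖ ^ 2 := by rw [Real.norm_eq_abs]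
    _ ≤ ∑ j, ‖x j‖ ^ 2 :=
      Finset.single_le_sum (f := fun j => ‖x j‖ ^ 2) (fun j _ => sq_nonneg _) (Finset.mem_univ i)

lemma euclid_norm_le_sum {d : ℕ} (x : Rd d) : ‖x‖ ≤ ∑ i, |x i| := by
  rw [EuclideanSpace.norm_eq]
  have h1 : ∑ j, ‖x j‖ ^ 2 ≤ (∑ j, |x j|) ^ 2 := by
    simp only [Real.norm_eq_abs]
    exact Finset.sum_sq_le_sq_sum_of_nonneg (fun j _ => abs_nonneg _)
  calc Real.sqrt (∑ j, ‖x j‖ ^ 2) ≤ Real.sqrt ((∑ j, |x j|) ^ 2) := Real.sqrt_le_sqrt h1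
    _ = ∑ j, |x j| := Real.sqrt_sq (Finset.sum_nonneg fun j _ => abs_nonneg _)

lemma norm_udir {d : ℕ} (i : Fin d) : ‖udir d i‖ = 1 := by
  simp [udir, EuclideanSpace.norm_single]

set_option maxHeartbeats 1000000 in
/-- **Zero speed of propagation of the support** for the symmetrizable hyperbolic
system `∂ₜ v + (v·∇)v + 2a∇a = 0`, `∂ₜ a + (v·∇)a + (a/2) div v = 0` (obtained
from the compressible Euler system with `f(ρ)=ρ` by setting `a = √ρ`) :
a smooth solution whose data are supported in a compact set `K` remains
supported in `K` for every time `0 ≤ t < T_max` before blow-up. -/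
theorem zero_speed_of_propagation (d : ℕ) (Tmax : ℝ) (hT : 0 < Tmax)
    (v : ℝ → Rd d → Rd d) (a : ℝ → Rd d → ℝ)
    (hv : ContDiffOn ℝ (⊤ : ℕ∞) (fun p : ℝ × Rd d => v p.1 p.2)
      (Set.Ico 0 Tmax ×ˢ Set.univ))
    (ha : ContDiffOn ℝ (⊤ : ℕ∞) (fun p : ℝ × Rd d => a p.1 p.2)
      (Set.Ico 0 Tmax ×ˢ Set.univ))
    (K : Set (Rd d)) (hK : IsCompact K)
    (hsupp : ∀ x ∉ K, v 0 x = 0 ∧ a 0 x = 0)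
    (hPDE : ∀ t, 0 ≤ t → t < Tmax → ∀ x,
      (∀ i, deriv (fun τ => v τ x i) t
          + (∑ j, v t x j * pd j (fun y => v t y i) x)
          + 2 * a t x * pd i (a t) x = 0)
      ∧ deriv (fun τ => a τ x) t + (∑ j, v t x j * pd j (a t) x)
          + (1/2) * a t x * divV (v t) x = 0) :
    ∀ t, 0 ≤ t → t < Tmax → ∀ x ∉ K, v t x = 0 ∧ a t x = 0 := by
  intro t0 ht0 ht0' x hx
  rcases ht0.eq_or_lt with h0 | h0
  · exact h0 ▸ hsupp x hx
  -- notation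
  set F : ℝ × Rd d → Rd d := fun p : ℝ × Rd d => v p.1 p.2 with hFdef
  set G : ℝ × Rd d → ℝ := fun p : ℝ × Rd d => a p.1 p.2 with hGdef
  set S : Set (ℝ × Rd d) := Set.Ico 0 Tmax ×ˢ Set.univ with hSdef
  have hTt : ∀ t : ℝ, t ≤ t0 → t < Tmax := fun t h => lt_of_le_of_lt h ht0'
  have hmemS : ∀ t : ℝ, 0 ≤ t → t < Tmax → ((t, x) : ℝ × Rd d) ∈ S :=
    fun t h1 h2 => ⟨⟨h1, h2⟩, trivial⟩
  have hSnhds : ∀ t : ℝ, 0 < t → t < Tmax → ∀ z : Rd d, S ∈ 𝓝 ((t, z) : ℝ × Rd d) := by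
    intro t h1 h2 z
    refine Filter.mem_of_superset
      ((isOpen_Ioo.prod isOpen_univ).mem_nhds ⟨⟨h1, h2⟩, trivial⟩) ?_
    exact Set.prod_mono Set.Ioo_subset_Ico_self le_rfl
  have hSuniq : UniqueDiffOn ℝ S := (uniqueDiffOn_Ico 0 Tmax).prod uniqueDiffOn_univ
  -- bounds on spatial/temporal derivatives along the compact segment
  have hπcont : Continuous (fun t : ℝ => ((t, x) : ℝ × Rd d)) :=
    continuous_id.prodMk continuous_const
  have hLcomp : IsCompact ((fun t : ℝ => ((t, x) : ℝ × Rd d)) '' Set.Icc 0 t0) :=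
    isCompact_Icc.image hπcont
  have hLsub : ((fun t : ℝ => ((t, x) : ℝ × Rd d)) '' Set.Icc 0 t0) ⊆ S := by
    rintro p ⟨t, ht, rfl⟩
    exact hmemS t ht.1 (hTt t ht.2)
  obtain ⟨Cv, hCv⟩ := hLcomp.exists_bound_of_continuousOn
    ((hv.continuousOn_fderivWithin hSuniq (by simp)).mono hLsub)
  obtain ⟨Ca, hCa⟩ := hLcomp.exists_bound_of_continuousOn
    ((ha.continuousOn_fderivWithin hSuniq (by simp)).mono hLsub)
  set C1 : ℝ := max (max Cv Ca) 0 with hC1def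
  have hC1n : (0:ℝ) ≤ C1 := le_max_right _ _
  have hC1v : ∀ t ∈ Set.Icc (0:ℝ) t0, ‖fderivWithin ℝ F S (t, x)‖ ≤ C1 := fun t ht =>
    le_trans (hCv _ ⟨t, ht, rfl⟩) (le_max_of_le_left (le_max_left _ _))
  have hC1a : ∀ t ∈ Set.Icc (0:ℝ) t0, ‖fderivWithin ℝ G S (t, x)‖ ≤ C1 := fun t ht =>
    le_trans (hCa _ ⟨t, ht, rfl⟩) (le_max_of_le_left (le_max_right _ _))
  -- the curve and its derivative
  set f : ℝ → (Rd d) × ℝ := fun τ => (v τ x, a τ x) with hfdef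
  set f' : ℝ → (Rd d) × ℝ :=
    fun τ => (fderivWithin ℝ F S (τ, x) (1, 0), fderivWithin ℝ G S (τ, x) (1, 0)) with hf'def
  have hfd_eqF : ∀ t : ℝ, 0 < t → t < Tmax →
      fderiv ℝ F (t, x) = fderivWithin ℝ F S (t, x) :=
    fun t h1 h2 => (fderivWithin_of_mem_nhds (hSnhds t h1 h2 x)).symm
  have hfd_eqG : ∀ t : ℝ, 0 < t → t < Tmax →
      fderiv ℝ G (t, x) = fderivWithin ℝ G S (t, x) :=
    fun t h1 h2 => (fderivWithin_of_mem_nhds (hSnhds t h1 h2 x)).symm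
  have hFdiff : ∀ t : ℝ, 0 < t → t < Tmax → DifferentiableAt ℝ F (t, x) :=
    fun t h1 h2 => (hv.contDiffAt (hSnhds t h1 h2 x)).differentiableAt (by simp)
  have hGdiff : ∀ t : ℝ, 0 < t → t < Tmax → DifferentiableAt ℝ G (t, x) :=
    fun t h1 h2 => (ha.contDiffAt (hSnhds t h1 h2 x)).differentiableAt (by simp)
  -- time derivatives
  have hcore : ∀ t : ℝ, 0 < t → t < Tmax →
      HasDerivAt f (f' t) t ∧
      (∀ i : Fin d, deriv (fun τ => v τ x i) t = (f' t).1 i) ∧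
      deriv (fun τ => a τ x) t = (f' t).2 := by
    intro t h1 h2
    have hι : HasDerivAt (fun τ : ℝ => ((τ, x) : ℝ × Rd d)) (1, 0) t :=
      (hasDerivAt_id t).prodMk (hasDerivAt_const t x)
    have hV : HasDerivAt (fun τ => v τ x) (fderiv ℝ F (t, x) (1, 0)) t :=
      by have h := (hFdiff t h1 h2).hasFDerivAt.comp_hasDerivAt t hι; exact h
    have hA : HasDerivAt (fun τ => a τ x) (fderiv ℝ G (t, x) (1, 0)) t :=
      by have h := (hGdiff t h1 h2).hasFDerivAt.comp_hasDerivAt t hι; exact h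
    rw [hfd_eqF t h1 h2] at hV
    rw [hfd_eqG t h1 h2] at hA
    refine ⟨hV.prodMk hA, fun i => ?_, hA.deriv⟩
    have hVi := (EuclideanSpace.proj i).hasFDerivAt.comp_hasDerivAt t hV
    have hVi' : HasDerivAt (fun τ => v τ x i) (fderivWithin ℝ F S (t, x) (1, 0) i) t := by
      simpa [Function.comp_def] using hVi
    exact hVi'.deriv
  -- spatial derivative bounds
  have hpd : ∀ t : ℝ, 0 < t → t ≤ t0 →
      (∀ i j : Fin d, |pd j (fun z => v t z i) x| ≤ C1) ∧
      (∀ j : Fin d, |pd j (a t) x| ≤ C1) := by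
    intro t h1 h2
    have h2T : t < Tmax := hTt t h2
    have hκt : HasFDerivAt (fun z : Rd d => ((t, z) : ℝ × Rd d))
        ((0 : Rd d →L[ℝ] ℝ).prod (ContinuousLinearMap.id ℝ (Rd d))) x :=
      (hasFDerivAt_const t x).prodMk (hasFDerivAt_id x)
    have hnorm01 : ∀ j : Fin d, ‖(((0:ℝ), udir d j) : ℝ × Rd d)‖ = 1 := by
      intro j
      rw [Prod.norm_def]
      simp [norm_udir]
    constructor
    · intro i j
      have hVx : HasFDerivAt (fun z => v t z)
          ((fderiv ℝ F (t, x)).comp ((0 : Rd d →L[ℝ] ℝ).prod (ContinuousLinearMap.id ℝ (Rd d)))) x :=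
        (hFdiff t h1 h2T).hasFDerivAt.comp x hκt
      have hVxi : HasFDerivAt (fun z => v t z i)
          ((EuclideanSpace.proj i).comp
            ((fderiv ℝ F (t, x)).comp ((0 : Rd d →L[ℝ] ℝ).prod (ContinuousLinearMap.id ℝ (Rd d))))) x := by
        have h := ((EuclideanSpace.proj (𝕜 := ℝ) i).hasFDerivAt
          (x := v t x)).comp x hVx
        simpa [Function.comp_def] using h
      have e1 : pd j (fun z => v t z i) x = fderivWithin ℝ F S (t, x) ((0:ℝ), udir d j) i := by
        rw [pd, hVxi.fderiv, ← hfd_eqF t h1 h2T]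
        simp
      rw [e1]
      calc |fderivWithin ℝ F S (t, x) ((0:ℝ), udir d j) i|
          ≤ ‖fderivWithin ℝ F S (t, x) ((0:ℝ), udir d j)‖ := euclid_abs_le_norm _ i
        _ ≤ ‖fderivWithin ℝ F S (t, x)‖ * ‖(((0:ℝ), udir d j) : ℝ × Rd d)‖ :=
            ContinuousLinearMap.le_opNorm _ _
        _ = ‖fderivWithin ℝ F S (t, x)‖ := by rw [hnorm01 j, mul_one]
        _ ≤ C1 := hC1v t ⟨h1.le, h2⟩
    · intro j
      have hAx : HasFDerivAt (a t)
          ((fderiv ℝ G (t, x)).comp ((0 : Rd d →L[ℝ] ℝ).prod (ContinuousLinearMap.id ℝ (Rd d)))) x :=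
        (hGdiff t h1 h2T).hasFDerivAt.comp x hκt
      have e2 : pd j (a t) x = fderivWithin ℝ G S (t, x) ((0:ℝ), udir d j) := by
        rw [pd, hAx.fderiv, ← hfd_eqG t h1 h2T]
        simp
      rw [e2]
      calc |fderivWithin ℝ G S (t, x) ((0:ℝ), udir d j)|
          = ‖fderivWithin ℝ G S (t, x) ((0:ℝ), udir d j)‖ := (Real.norm_eq_abs _).symm
        _ ≤ ‖fderivWithin ℝ G S (t, x)‖ * ‖(((0:ℝ), udir d j) : ℝ × Rd d)‖ :=
            ContinuousLinearMap.le_opNorm _ _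
        _ = ‖fderivWithin ℝ G S (t, x)‖ := by rw [hnorm01 j, mul_one]
        _ ≤ C1 := hC1a t ⟨h1.le, h2⟩
  -- the Gronwall constant
  set Kc : ℝ := ((d:ℝ) + 1) * ((d:ℝ) + 2) * C1 with hKcdef
  have hd0 : (0:ℝ) ≤ (d:ℝ) := Nat.cast_nonneg d
  have hKc0 : 0 ≤ Kc := by positivity
  -- the pointwise bound on the derivative
  have hbound : ∀ t : ℝ, 0 < t → t < t0 → ‖f' t‖ ≤ Kc * ‖f t‖ := by
    intro t h1 h2
    have h2T : t < Tmax := hTt t h2.le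
    obtain ⟨hPv, hPa⟩ := hPDE t h1.le h2T x
    obtain ⟨-, hdV, hdA⟩ := hcore t h1 h2T
    obtain ⟨hpdv, hpda⟩ := hpd t h1 h2.le
    have hfn : (0:ℝ) ≤ ‖f t‖ := norm_nonneg _
    have hfst : ‖v t x‖ ≤ ‖f t‖ := norm_fst_le (f t)
    have hsnd : |a t x| ≤ ‖f t‖ := by
      have := norm_snd_le (f t)
      simpa [Real.norm_eq_abs] using this
    have hvj : ∀ j : Fin d, |v t x j| ≤ ‖f t‖ :=
      fun j => (euclid_abs_le_norm (v t x) j).trans hfst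
    -- bound each component of the fst part
    have hcomp : ∀ i : Fin d, |(f' t).1 i| ≤ ((d:ℝ) + 2) * (C1 * ‖f t‖) := by
      intro i
      have heq : (f' t).1 i = -(∑ j, v t x j * pd j (fun y => v t y i) x)
          - 2 * a t x * pd i (a t) x := by
        have h := hPv i
        rw [hdV i] at h
        linarith
      rw [heq]
      have hsum : |∑ j, v t x j * pd j (fun y => v t y i) x| ≤ (d:ℝ) * (‖f t‖ * C1) := by
        calc |∑ j, v t x j * pd j (fun y => v t y i) x|
            ≤ ∑ j, |v t x j * pd j (fun y => v t y i) x| := Finset.abs_sum_le_sum_abs _ _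
          _ ≤ ∑ _j : Fin d, ‖f t‖ * C1 := Finset.sum_le_sum (fun j _ => by
              rw [abs_mul]
              exact mul_le_mul (hvj j) (hpdv i j) (abs_nonneg _) hfn)
          _ = (d:ℝ) * (‖f t‖ * C1) := by
              simp [Finset.sum_const, Finset.card_univ]
      have h2a : |2 * a t x * pd i (a t) x| ≤ 2 * (‖f t‖ * C1) := by
        rw [abs_mul, abs_mul, abs_two]
        calc 2 * |a t x| * |pd i (a t) x| ≤ 2 * ‖f t‖ * C1 := by
              apply mul_le_mul _ (hpda i) (abs_nonneg _) (by positivity)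
              exact mul_le_mul_of_nonneg_left hsnd (by norm_num)
          _ = 2 * (‖f t‖ * C1) := by ring
      calc |-(∑ j, v t x j * pd j (fun y => v t y i) x) - 2 * a t x * pd i (a t) x|
          ≤ |∑ j, v t x j * pd j (fun y => v t y i) x| + |2 * a t x * pd i (a t) x| := by
            rw [← abs_neg (∑ j, v t x j * pd j (fun y => v t y i) x) ]
            exact abs_sub _ _
        _ ≤ (d:ℝ) * (‖f t‖ * C1) + 2 * (‖f t‖ * C1) := add_le_add hsum h2a
        _ = ((d:ℝ) + 2) * (C1 * ‖f t‖) := by ring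
    have hVnorm : ‖(f' t).1‖ ≤ (d:ℝ) * (((d:ℝ) + 2) * (C1 * ‖f t‖)) := by
      calc ‖(f' t).1‖ ≤ ∑ i, |(f' t).1 i| := euclid_norm_le_sum _
        _ ≤ ∑ _i : Fin d, ((d:ℝ) + 2) * (C1 * ‖f t‖) :=
            Finset.sum_le_sum (fun i _ => hcomp i)
        _ = (d:ℝ) * (((d:ℝ) + 2) * (C1 * ‖f t‖)) := by
            simp [Finset.sum_const, Finset.card_univ]
    have hdiv : |divV (v t) x| ≤ (d:ℝ) * C1 := by
      calc |divV (v t) x| ≤ ∑ i, |pd i (fun y => v t y i) x| := Finset.abs_sum_le_sum_abs _ _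
        _ ≤ ∑ _i : Fin d, C1 := Finset.sum_le_sum (fun i _ => hpdv i i)
        _ = (d:ℝ) * C1 := by simp [Finset.sum_const, Finset.card_univ]
    have hAnorm : |(f' t).2| ≤ (d:ℝ) * (‖f t‖ * C1) + (1/2) * (‖f t‖ * ((d:ℝ) * C1)) := by
      have heq : (f' t).2 = -(∑ j, v t x j * pd j (a t) x)
          - (1/2) * a t x * divV (v t) x := by
        rw [← hdA]; linarith
      rw [heq]
      have hsum : |∑ j, v t x j * pd j (a t) x| ≤ (d:ℝ) * (‖f t‖ * C1) := by
        calc |∑ j, v t x j * pd j (a t) x| ≤ ∑ j, |v t x j * pd j (a t) x| :=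
              Finset.abs_sum_le_sum_abs _ _
          _ ≤ ∑ _j : Fin d, ‖f t‖ * C1 := Finset.sum_le_sum (fun j _ => by
              rw [abs_mul]
              exact mul_le_mul (hvj j) (hpda j) (abs_nonneg _) hfn)
          _ = (d:ℝ) * (‖f t‖ * C1) := by simp [Finset.sum_const, Finset.card_univ]
      have h2a : |(1/2) * a t x * divV (v t) x| ≤ (1/2) * (‖f t‖ * ((d:ℝ) * C1)) := by
        rw [abs_mul, abs_mul]
        have : |(1/2 : ℝ)| = 1/2 := by norm_num
        rw [this, mul_assoc]
        apply mul_le_mul_of_nonneg_left _ (by norm_num : (0:ℝ) ≤ 1/2)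
        exact mul_le_mul hsnd hdiv (abs_nonneg _) hfn
      calc |-(∑ j, v t x j * pd j (a t) x) - (1/2) * a t x * divV (v t) x|
          ≤ |∑ j, v t x j * pd j (a t) x| + |(1/2) * a t x * divV (v t) x| := by
            rw [← abs_neg (∑ j, v t x j * pd j (a t) x)]
            exact abs_sub _ _
        _ ≤ (d:ℝ) * (‖f t‖ * C1) + (1/2) * (‖f t‖ * ((d:ℝ) * C1)) := add_le_add hsum h2a
    have hprod : ‖f' t‖ = max ‖(f' t).1‖ |(f' t).2| := by
      rw [Prod.norm_def, Real.norm_eq_abs]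
    rw [hprod]
    apply max_le
    · calc ‖(f' t).1‖ ≤ (d:ℝ) * (((d:ℝ) + 2) * (C1 * ‖f t‖)) := hVnorm
        _ ≤ Kc * ‖f t‖ := by
            rw [hKcdef]
            nlinarith [mul_nonneg hC1n hfn]
    · calc |(f' t).2| ≤ (d:ℝ) * (‖f t‖ * C1) + (1/2) * (‖f t‖ * ((d:ℝ) * C1)) := hAnorm
        _ ≤ Kc * ‖f t‖ := by
            rw [hKcdef]
            nlinarith [mul_nonneg hC1n hfn, mul_nonneg (mul_nonneg hd0 hC1n) hfn]
  -- continuity of the curve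
  have hfc : ContinuousOn f (Set.Icc 0 t0) := by
    have hmaps : Set.MapsTo (fun t : ℝ => ((t, x) : ℝ × Rd d)) (Set.Icc 0 t0) S :=
      fun t ht => hmemS t ht.1 (hTt t ht.2)
    have h1 : ContinuousOn (fun τ : ℝ => v τ x) (Set.Icc 0 t0) :=
      hv.continuousOn.comp hπcont.continuousOn hmaps
    have h2 : ContinuousOn (fun τ : ℝ => a τ x) (Set.Icc 0 t0) :=
      ha.continuousOn.comp hπcont.continuousOn hmaps
    exact h1.prodMk h2
  -- Gronwall on [s, t0] for every 0 < s ≤ t0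
  have key : ∀ s : ℝ, 0 < s → s ≤ t0 → ‖f t0‖ ≤ ‖f s‖ * Real.exp (Kc * t0) := by
    intro s hs hst
    have hg := norm_le_gronwallBound_of_norm_deriv_right_le
      (f := f) (f' := f') (δ := ‖f s‖) (K := Kc) (ε := 0) (a := s) (b := t0)
      (hfc.mono (Set.Icc_subset_Icc_left hs.le))
      (fun t ht => ((hcore t (hs.trans_le ht.1) (hTt t ht.2.le)).1).hasDerivWithinAt)
      le_rfl
      (fun t ht => by
        rw [add_zero]
        exact hbound t (hs.trans_le ht.1) ht.2)
    have h := hg t0 ⟨hst, le_rfl⟩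
    rw [gronwallBound_ε0] at h
    calc ‖f t0‖ ≤ ‖f s‖ * Real.exp (Kc * (t0 - s)) := h
      _ ≤ ‖f s‖ * Real.exp (Kc * t0) := by
          apply mul_le_mul_of_nonneg_left _ (norm_nonneg _)
          apply Real.exp_le_exp.2
          nlinarith [hKc0, hs]
  -- pass to the limit s → 0⁺
  have hf0 : f 0 = 0 := by
    obtain ⟨h1, h2⟩ := hsupp x hx
    simp only [hfdef, h1, h2]
    rfl
  have hmono : 𝓝[Set.Ioc (0:ℝ) t0] (0:ℝ) ≤ 𝓝[Set.Icc (0:ℝ) t0] (0:ℝ) :=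
    nhdsWithin_mono _ Set.Ioc_subset_Icc_self
  have hlim : Filter.Tendsto (fun s => ‖f s‖ * Real.exp (Kc * t0))
      (𝓝[Set.Ioc (0:ℝ) t0] (0:ℝ)) (𝓝 0) := by
    have h1 : Filter.Tendsto f (𝓝[Set.Icc (0:ℝ) t0] (0:ℝ)) (𝓝 0) := by
      have := hfc 0 ⟨le_rfl, h0.le⟩
      rw [ContinuousWithinAt, hf0] at this
      exact this
    have h2 := ((h1.mono_left hmono).norm.mul_const (Real.exp (Kc * t0)))
    simpa using h2
  haveI hne : (𝓝[Set.Ioc (0:ℝ) t0] (0:ℝ)).NeBot := by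
    apply mem_closure_iff_nhdsWithin_neBot.1
    rw [closure_Ioc h0.ne]
    exact ⟨le_rfl, h0.le⟩
  have hev : ∀ᶠ s in 𝓝[Set.Ioc (0:ℝ) t0] (0:ℝ), ‖f t0‖ ≤ ‖f s‖ * Real.exp (Kc * t0) :=
    eventually_mem_nhdsWithin.mono (fun s hs => key s hs.1 hs.2)
  have hle : ‖f t0‖ ≤ 0 := ge_of_tendsto hlim hev
  have hft0 : f t0 = 0 := norm_le_zero_iff.1 hle
  exact ⟨congrArg Prod.fst hft0, congrArg Prod.snd hft0⟩
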